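/- arXiv:1503.00527 — 4 statements merged into one kernel-verified Lean document; each statement's English description precedes it below -/
import Mathlib

section
/- In the tied braid monoid TB_n (with σ_i invertible), for |j-i|=1 the four elements σ_j^{-1}η_iσ_j, σ_jη_iσ_j^{-1}, σ_iη_jσ_i^{-1}, and σ_i^{-1}η_jσ_i are all equal. -/
theorem Units.inv_mul_mul_eq_mul_mul_inv_of_mul_mul_eq {M : Type*} [Monoid M] {x y : M}
    (u v : Mˣ) (h : x * (u * v) = u * v * y) : ↑u⁻¹ * x * u = v * y * ↑v⁻¹ :=
  calc ↑u⁻¹ * x * u = ↑u⁻¹ * (x * (u * v)) * ↑v⁻¹ := by simp [mul_assoc]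
    _ = v * y * ↑v⁻¹ := by rw [h]; simp [mul_assoc]

theorem tb_eta_four_expressions_general
    {M : Type*} [Monoid M] (n : ℕ) (σ σi η : ℕ → M)
    (hinv : ∀ i, 1 ≤ i → i ≤ n - 1 → σ i * σi i = 1 ∧ σi i * σ i = 1)
    (hess : ∀ i j, 1 ≤ i → i ≤ n - 1 → 1 ≤ j → j ≤ n - 1 → Nat.dist i j = 1 →
      η i * (σ j * σ i) = σ j * σ i * η j)
    (hessi : ∀ i j, 1 ≤ i → i ≤ n - 1 → 1 ≤ j → j ≤ n - 1 → Nat.dist i j = 1 →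
      η i * (σ j * σi i) = σ j * σi i * η j) :
    ∀ i j, 1 ≤ i → i ≤ n - 1 → 1 ≤ j → j ≤ n - 1 → Nat.dist i j = 1 →
      σi j * η i * σ j = σ j * η i * σi j ∧
      σi j * η i * σ j = σ i * η j * σi i ∧
      σi j * η i * σ j = σi i * η j * σ i := by
  intro i j hi₁ hi₂ hj₁ hj₂ hij
  have hji : Nat.dist j i = 1 := Nat.dist_comm i j ▸ hij
  let s : ∀ k, 1 ≤ k → k ≤ n - 1 → Mˣ := fun k hk₁ hk₂ =>
    ⟨σ k, σi k, (hinv k hk₁ hk₂).1, (hinv k hk₁ hk₂).2⟩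
  have e₁ : σi j * η i * σ j = σ i * η j * σi i :=
    (s j hj₁ hj₂).inv_mul_mul_eq_mul_mul_inv_of_mul_mul_eq (s i hi₁ hi₂)
      (hess i j hi₁ hi₂ hj₁ hj₂ hij)
  have e₂ : σi i * η j * σ i = σ j * η i * σi j :=
    (s i hi₁ hi₂).inv_mul_mul_eq_mul_mul_inv_of_mul_mul_eq (s j hj₁ hj₂)
      (hess j i hj₁ hj₂ hi₁ hi₂ hji)
  have e₃ : σi i * η j * σ i = σi j * η i * σ j :=
    (s i hi₁ hi₂).inv_mul_mul_eq_mul_mul_inv_of_mul_mul_eq (s j hj₁ hj₂)⁻¹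
      (hessi j i hj₁ hj₂ hi₁ hi₂ hji)
  exact ⟨e₃.symm.trans e₂, e₁, e₃.symm⟩

theorem tb_eta_four_expressions
    {M : Type*} [Monoid M] (n : ℕ) (σ σi η : ℕ → M)
    (hinv : ∀ i, 1 ≤ i → i ≤ n - 1 → σ i * σi i = 1 ∧ σi i * σ i = 1)
    (hssfar : ∀ i j, 1 ≤ i → i ≤ n - 1 → 1 ≤ j → j ≤ n - 1 → 1 < Nat.dist i j →
      σ i * σ j = σ j * σ i)
    (hbraid : ∀ i j, 1 ≤ i → i ≤ n - 1 → 1 ≤ j → j ≤ n - 1 → Nat.dist i j = 1 →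
      σ i * σ j * σ i = σ j * σ i * σ j)
    (hee : ∀ i j, 1 ≤ i → i ≤ n - 1 → 1 ≤ j → j ≤ n - 1 → η i * η j = η j * η i)
    (hes : ∀ i, 1 ≤ i → i ≤ n - 1 → η i * σ i = σ i * η i)
    (hesfar : ∀ i j, 1 ≤ i → i ≤ n - 1 → 1 ≤ j → j ≤ n - 1 → 1 < Nat.dist i j →
      η i * σ j = σ j * η i)
    (hess : ∀ i j, 1 ≤ i → i ≤ n - 1 → 1 ≤ j → j ≤ n - 1 → Nat.dist i j = 1 →
      η i * (σ j * σ i) = σ j * σ i * η j)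
    (hessi : ∀ i j, 1 ≤ i → i ≤ n - 1 → 1 ≤ j → j ≤ n - 1 → Nat.dist i j = 1 →
      η i * (σ j * σi i) = σ j * σi i * η j)
    (hees : ∀ i j, 1 ≤ i → i ≤ n - 1 → 1 ≤ j → j ≤ n - 1 → Nat.dist i j = 1 →
      η i * η j * σ i = η j * σ i * η j ∧ η i * η j * σ i = σ i * (η i * η j))
    (hesq : ∀ i, 1 ≤ i → i ≤ n - 1 → η i * η i = η i) :
    ∀ i j, 1 ≤ i → i ≤ n - 1 → 1 ≤ j → j ≤ n - 1 → Nat.dist i j = 1 →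
      σi j * η i * σ j = σ j * η i * σi j ∧
      σi j * η i * σ j = σ i * η j * σi i ∧
      σi j * η i * σ j = σi i * η j * σ i :=
  tb_eta_four_expressions_general n σ σi η hinv hess hessi
end

section
/- In the tied braid monoid TB_n, for j-i=1 the element η_{i,j+1} := σ_j^{-1}η_iσ_j commutes with both η_i and η_j, and satisfies η_{i,j+1}η_i = η_iη_j and η_{i,j+1}η_j = η_iη_j. -/
/-!
Write `e = η_i`, `f = η_{i+1}`, `s = σ_i`, `t = σ_{i+1}`. The relation `f s t⁻¹ = s t⁻¹ e` shows that
`η_{i,i+2} = t⁻¹ e t` also equals `s⁻¹ f s`. Since `e` and `e f` both commute with `s`, conjugating by `s`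
fixes them, so multiplying `s⁻¹ f s` by `e` on either side gives `s⁻¹ (e f) s = e f`. Symmetrically,
`f` and `f e` commute with `t`, so multiplying `t⁻¹ e t` by `f` on either side gives `f e = e f`.
-/

namespace Units

variable {M : Type*} [Monoid M]

theorem mul_inv_mul_mul_eq (u : Mˣ) {x y : M} (hxu : Commute x u) (hxyu : Commute (x * y) u) :
    x * (↑u⁻¹ * y * u) = x * y := by
  calc x * (↑u⁻¹ * y * u) = ↑u⁻¹ * (x * y) * u := by
        rw [← mul_assoc, ← mul_assoc, hxu.units_inv_right.eq, mul_assoc _ x]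
    _ = x * y := commute_iff_inv_mul_cancel.mp hxyu.symm

theorem inv_mul_mul_mul_eq (u : Mˣ) {x y : M} (hxu : Commute x u) (hxy : Commute x y)
    (hxyu : Commute (x * y) u) : ↑u⁻¹ * y * u * x = x * y := by
  calc ↑u⁻¹ * y * u * x = ↑u⁻¹ * (x * y) * u := by
        rw [mul_assoc _ (u : M), ← hxu.eq, ← mul_assoc, mul_assoc _ y, ← hxy.eq, ← mul_assoc]
    _ = x * y := commute_iff_inv_mul_cancel.mp hxyu.symm

theorem inv_mul_mul_eq_inv_mul_mul (u v : Mˣ) {x y : M} (h : y * (u * ↑v⁻¹) = u * ↑v⁻¹ * x) :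
    ↑v⁻¹ * x * v = ↑u⁻¹ * y * u := by
  calc ↑v⁻¹ * x * v = ↑u⁻¹ * (u * ↑v⁻¹ * x) * v := by simp only [mul_assoc, inv_mul_cancel_left]
    _ = ↑u⁻¹ * (y * (u * ↑v⁻¹)) * v := by rw [h]
    _ = ↑u⁻¹ * y * u := by simp only [mul_assoc, mul_one, inv_mul]

end Units

theorem tb_eta_long_commutes_general
    {M : Type*} [Monoid M] (n : ℕ) (σ σi η : ℕ → M)
    (hinv : ∀ i, 1 ≤ i → i ≤ n - 1 → σ i * σi i = 1 ∧ σi i * σ i = 1)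
    (hee : ∀ i j, 1 ≤ i → i ≤ n - 1 → 1 ≤ j → j ≤ n - 1 → η i * η j = η j * η i)
    (hes : ∀ i, 1 ≤ i → i ≤ n - 1 → η i * σ i = σ i * η i)
    (hessi : ∀ i j, 1 ≤ i → i ≤ n - 1 → 1 ≤ j → j ≤ n - 1 → Nat.dist i j = 1 →
      η i * (σ j * σi i) = σ j * σi i * η j)
    (hees : ∀ i j, 1 ≤ i → i ≤ n - 1 → 1 ≤ j → j ≤ n - 1 → Nat.dist i j = 1 →
      η i * η j * σ i = η j * σ i * η j ∧ η i * η j * σ i = σ i * (η i * η j)) :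
    ∀ i j, 1 ≤ i → i ≤ n - 1 → 1 ≤ j → j ≤ n - 1 → j = i + 1 →
      (σi j * η i * σ j) * η i = η i * (σi j * η i * σ j) ∧
      (σi j * η i * σ j) * η j = η j * (σi j * η i * σ j) ∧
      (σi j * η i * σ j) * η i = η i * η j ∧
      (σi j * η i * σ j) * η j = η i * η j := by
  rintro i _ hi hi' hj hj' rfl
  let s : Mˣ := ⟨σ i, σi i, (hinv i hi hi').1, (hinv i hi hi').2⟩
  let t : Mˣ := ⟨σ (i + 1), σi (i + 1), (hinv _ hj hj').1, (hinv _ hj hj').2⟩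
  have hef : Commute (η i) (η (i + 1)) := hee _ _ hi hi' hj hj'
  have hconj : σi (i + 1) * η i * σ (i + 1) = σi i * η (i + 1) * σ i :=
    Units.inv_mul_mul_eq_inv_mul_mul s t (hessi _ _ hj hj' hi hi' (by simp [Nat.dist]))
  have hefs : Commute (η i * η (i + 1)) (σ i) := (hees _ _ hi hi' hj hj' (by simp [Nat.dist])).2
  have hfet : Commute (η (i + 1) * η i) (σ (i + 1)) := (hees _ _ hj hj' hi hi' (by simp [Nat.dist])).2
  have right_e : σi i * η (i + 1) * σ i * η i = η i * η (i + 1) :=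
    Units.inv_mul_mul_mul_eq s (hes _ hi hi') hef hefs
  have left_e : η i * (σi i * η (i + 1) * σ i) = η i * η (i + 1) :=
    Units.mul_inv_mul_mul_eq s (hes _ hi hi') hefs
  have right_f : σi (i + 1) * η i * σ (i + 1) * η (i + 1) = η (i + 1) * η i :=
    Units.inv_mul_mul_mul_eq t (hes _ hj hj') hef.symm hfet
  have left_f : η (i + 1) * (σi (i + 1) * η i * σ (i + 1)) = η (i + 1) * η i :=
    Units.mul_inv_mul_mul_eq t (hes _ hj hj') hfet
  rw [hconj] at right_f left_f ⊢
  exact ⟨right_e.trans left_e.symm, right_f.trans left_f.symm, right_e, right_f.trans hef.eq.symm⟩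

theorem tb_eta_long_commutes
    {M : Type*} [Monoid M] (n : ℕ) (σ σi η : ℕ → M)
    (hinv : ∀ i, 1 ≤ i → i ≤ n - 1 → σ i * σi i = 1 ∧ σi i * σ i = 1)
    (hssfar : ∀ i j, 1 ≤ i → i ≤ n - 1 → 1 ≤ j → j ≤ n - 1 → 1 < Nat.dist i j →
      σ i * σ j = σ j * σ i)
    (hbraid : ∀ i j, 1 ≤ i → i ≤ n - 1 → 1 ≤ j → j ≤ n - 1 → Nat.dist i j = 1 →
      σ i * σ j * σ i = σ j * σ i * σ j)
    (hee : ∀ i j, 1 ≤ i → i ≤ n - 1 → 1 ≤ j → j ≤ n - 1 → η i * η j = η j * η i)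
    (hes : ∀ i, 1 ≤ i → i ≤ n - 1 → η i * σ i = σ i * η i)
    (hesfar : ∀ i j, 1 ≤ i → i ≤ n - 1 → 1 ≤ j → j ≤ n - 1 → 1 < Nat.dist i j →
      η i * σ j = σ j * η i)
    (hess : ∀ i j, 1 ≤ i → i ≤ n - 1 → 1 ≤ j → j ≤ n - 1 → Nat.dist i j = 1 →
      η i * (σ j * σ i) = σ j * σ i * η j)
    (hessi : ∀ i j, 1 ≤ i → i ≤ n - 1 → 1 ≤ j → j ≤ n - 1 → Nat.dist i j = 1 →
      η i * (σ j * σi i) = σ j * σi i * η j)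
    (hees : ∀ i j, 1 ≤ i → i ≤ n - 1 → 1 ≤ j → j ≤ n - 1 → Nat.dist i j = 1 →
      η i * η j * σ i = η j * σ i * η j ∧ η i * η j * σ i = σ i * (η i * η j))
    (hesq : ∀ i, 1 ≤ i → i ≤ n - 1 → η i * η i = η i) :
    ∀ i j, 1 ≤ i → i ≤ n - 1 → 1 ≤ j → j ≤ n - 1 → j = i + 1 →
      (σi j * η i * σ j) * η i = η i * (σi j * η i * σ j) ∧
      (σi j * η i * σ j) * η j = η j * (σi j * η i * σ j) ∧
      (σi j * η i * σ j) * η i = η i * η j ∧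
      (σi j * η i * σ j) * η j = η i * η j :=
  tb_eta_long_commutes_general n σ σi η hinv hee hes hessi hees
end

section
/- The mapping σ_i ↦ T_i, η_i ↦ E_i extends to a monoid homomorphism from the tied braid monoid TB_n to the multiplicative monoid of the bt-algebra E_n; i.e., the images T_i, E_i satisfy all defining relations of TB_n, including E_iT_jT_i^{-1} = T_jT_i^{-1}E_j for |i-j|=1. -/
/-!
Since `E i` is an idempotent commuting with `T i`, the quadratic relation gives
`E i * T i ^ 2 = u • E i + (u - 1) • (E i * T i)`, from which the stated formula for `T i⁻¹` is
checked to be a two-sided inverse. That inverse is an `F`-linear combination of `T i`, `E i` and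
`E i * T i`, and each of these three words `x` satisfies `E i * (T j * x) = T j * x * E j`;
this gives `E i T j T i⁻¹ = T j T i⁻¹ E j`. The other relations of the tied braid monoid are
among the defining relations of the bt-algebra.
-/

section BtInverse

variable {F A : Type*} [Field F] [Ring A] [Algebra F A]

/-- The inverse of a generator `t` of the bt-algebra, with `e` the tie attached to it. -/
def btInv (u : F) (t e : A) : A :=
  t + (u⁻¹ - 1) • e + (u⁻¹ - 1) • (e * t)

variable {u : F} {t e : A}

lemma idempotent_mul_sq (hsq : t * t = 1 + (u - 1) • (e * (1 + t))) (hid : e * e = e) :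
    e * (t * t) = u • e + (u - 1) • (e * t) := by
  rw [hsq]
  simp only [mul_add, mul_one, mul_smul_comm, ← mul_assoc, hid]
  module

lemma mul_btInv (hu : u ≠ 0) (hsq : t * t = 1 + (u - 1) • (e * (1 + t)))
    (hcomm : e * t = t * e) (hid : e * e = e) : t * btInv u t e = 1 := by
  have hete : t * (e * t) = u • e + (u - 1) • (e * t) := by
    rw [← mul_assoc, ← hcomm, mul_assoc, idempotent_mul_sq hsq hid]
  rw [btInv, mul_add, mul_add, mul_smul_comm, mul_smul_comm, ← hcomm, hete, hsq]
  simp only [mul_add, mul_one]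
  match_scalars <;> field_simp <;> ring

lemma btInv_mul (hu : u ≠ 0) (hsq : t * t = 1 + (u - 1) • (e * (1 + t)))
    (hid : e * e = e) : btInv u t e * t = 1 := by
  have hett : e * t * t = u • e + (u - 1) • (e * t) := by
    rw [mul_assoc, idempotent_mul_sq hsq hid]
  rw [btInv, add_mul, add_mul, smul_mul_assoc, smul_mul_assoc, hett, hsq]
  simp only [mul_add, mul_one]
  match_scalars <;> field_simp <;> ring

lemma mul_mul_btInv_comm {ti tj ei ej : A} (hETi : ei * ti = ti * ei) (hEE : ei * ej = ej * ei)
    (hETT : ei * (tj * ti) = tj * ti * ej)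
    (hEETij : ei * ej * ti = ti * (ei * ej))
    (hEETji₁ : ej * ei * tj = tj * (ej * ei)) (hEETji₂ : ej * ei * tj = ei * tj * ei) :
    ei * (tj * btInv u ti ei) = tj * btInv u ti ei * ej := by
  have hE : ei * (tj * ei) = tj * ei * ej := by
    rw [← mul_assoc, ← hEETji₂, hEETji₁, ← hEE, mul_assoc]
  have hET : ei * (tj * (ei * ti)) = tj * (ei * ti) * ej :=
    calc ei * (tj * (ei * ti)) = ei * (tj * ei) * ti := by simp only [mul_assoc]
      _ = tj * (ei * ej * ti) := by rw [hE]; simp only [mul_assoc]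
      _ = tj * (ei * ti) * ej := by rw [hEETij, hETi]; simp only [mul_assoc]
  simp only [btInv, mul_add, add_mul, mul_smul_comm, smul_mul_assoc]
  rw [hETT, hE, hET]

end BtInverse

theorem tb_representation_in_bt_algebra_general
    {F : Type*} [Field F] {A : Type*} [Ring A] [Algebra F A]
    (n : ℕ) (u : F) (hu : u ≠ 0) (T E : ℕ → A)
    (hTsq : ∀ i, 1 ≤ i → i ≤ n - 1 → T i * T i = 1 + (u - 1) • (E i * (1 + T i)))
    (hEE : ∀ i j, 1 ≤ i → i ≤ n - 1 → 1 ≤ j → j ≤ n - 1 → E i * E j = E j * E i)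
    (hEsq : ∀ i, 1 ≤ i → i ≤ n - 1 → E i * E i = E i)
    (hET : ∀ i, 1 ≤ i → i ≤ n - 1 → E i * T i = T i * E i)
    (hETfar : ∀ i j, 1 ≤ i → i ≤ n - 1 → 1 ≤ j → j ≤ n - 1 → 1 < Nat.dist i j →
      E i * T j = T j * E i)
    (hEET : ∀ i j, 1 ≤ i → i ≤ n - 1 → 1 ≤ j → j ≤ n - 1 → Nat.dist i j = 1 →
      E i * E j * T i = T i * (E i * E j) ∧ E i * E j * T i = E j * T i * E j)
    (hETT : ∀ i j, 1 ≤ i → i ≤ n - 1 → 1 ≤ j → j ≤ n - 1 → Nat.dist i j = 1 →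
      E i * (T j * T i) = T j * T i * E j)
    (Tinv : ℕ → A)
    (hTinv : ∀ i, 1 ≤ i → i ≤ n - 1 →
      Tinv i = T i + (u⁻¹ - 1) • E i + (u⁻¹ - 1) • (E i * T i)) :
    (∀ i, 1 ≤ i → i ≤ n - 1 → T i * Tinv i = 1 ∧ Tinv i * T i = 1) ∧
    (∀ i j, 1 ≤ i → i ≤ n - 1 → 1 ≤ j → j ≤ n - 1 → E i * E j = E j * E i) ∧
    (∀ i, 1 ≤ i → i ≤ n - 1 → E i * T i = T i * E i) ∧
    (∀ i j, 1 ≤ i → i ≤ n - 1 → 1 ≤ j → j ≤ n - 1 → 1 < Nat.dist i j →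
      E i * T j = T j * E i) ∧
    (∀ i j, 1 ≤ i → i ≤ n - 1 → 1 ≤ j → j ≤ n - 1 → Nat.dist i j = 1 →
      E i * (T j * T i) = T j * T i * E j) ∧
    (∀ i j, 1 ≤ i → i ≤ n - 1 → 1 ≤ j → j ≤ n - 1 → Nat.dist i j = 1 →
      E i * (T j * Tinv i) = T j * Tinv i * E j) ∧
    (∀ i j, 1 ≤ i → i ≤ n - 1 → 1 ≤ j → j ≤ n - 1 → Nat.dist i j = 1 →
      E i * E j * T i = E j * T i * E j ∧ E i * E j * T i = T i * (E i * E j)) ∧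
    (∀ i, 1 ≤ i → i ≤ n - 1 → E i * E i = E i) := by
  refine ⟨?_, hEE, hET, hETfar, hETT, ?_, ?_, hEsq⟩
  · intro i hi₁ hi₂
    rw [hTinv i hi₁ hi₂]
    exact ⟨mul_btInv hu (hTsq i hi₁ hi₂) (hET i hi₁ hi₂) (hEsq i hi₁ hi₂),
      btInv_mul hu (hTsq i hi₁ hi₂) (hEsq i hi₁ hi₂)⟩
  · intro i j hi₁ hi₂ hj₁ hj₂ hd
    have hEETji := hEET j i hj₁ hj₂ hi₁ hi₂ (by rwa [Nat.dist_comm])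
    rw [hTinv i hi₁ hi₂]
    exact mul_mul_btInv_comm (hET i hi₁ hi₂) (hEE i j hi₁ hi₂ hj₁ hj₂)
      (hETT i j hi₁ hi₂ hj₁ hj₂ hd) (hEET i j hi₁ hi₂ hj₁ hj₂ hd).1 hEETji.1 hEETji.2
  · intro i j hi₁ hi₂ hj₁ hj₂ hd
    exact (hEET i j hi₁ hi₂ hj₁ hj₂ hd).symm

theorem tb_representation_in_bt_algebra
    {F : Type*} [Field F] {A : Type*} [Ring A] [Algebra F A]
    (n : ℕ) (u : F) (hu : u ≠ 0) (T E : ℕ → A)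
    (hTT : ∀ i j, 1 ≤ i → i ≤ n - 1 → 1 ≤ j → j ≤ n - 1 → 1 < Nat.dist i j →
      T i * T j = T j * T i)
    (hbraid : ∀ i j, 1 ≤ i → i ≤ n - 1 → 1 ≤ j → j ≤ n - 1 → Nat.dist i j = 1 →
      T i * T j * T i = T j * T i * T j)
    (hTsq : ∀ i, 1 ≤ i → i ≤ n - 1 → T i * T i = 1 + (u - 1) • (E i * (1 + T i)))
    (hEE : ∀ i j, 1 ≤ i → i ≤ n - 1 → 1 ≤ j → j ≤ n - 1 → E i * E j = E j * E i)
    (hEsq : ∀ i, 1 ≤ i → i ≤ n - 1 → E i * E i = E i)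
    (hET : ∀ i, 1 ≤ i → i ≤ n - 1 → E i * T i = T i * E i)
    (hETfar : ∀ i j, 1 ≤ i → i ≤ n - 1 → 1 ≤ j → j ≤ n - 1 → 1 < Nat.dist i j →
      E i * T j = T j * E i)
    (hEET : ∀ i j, 1 ≤ i → i ≤ n - 1 → 1 ≤ j → j ≤ n - 1 → Nat.dist i j = 1 →
      E i * E j * T i = T i * (E i * E j) ∧ E i * E j * T i = E j * T i * E j)
    (hETT : ∀ i j, 1 ≤ i → i ≤ n - 1 → 1 ≤ j → j ≤ n - 1 → Nat.dist i j = 1 →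
      E i * (T j * T i) = T j * T i * E j)
    (Tinv : ℕ → A)
    (hTinv : ∀ i, 1 ≤ i → i ≤ n - 1 →
      Tinv i = T i + (u⁻¹ - 1) • E i + (u⁻¹ - 1) • (E i * T i)) :
    (∀ i, 1 ≤ i → i ≤ n - 1 → T i * Tinv i = 1 ∧ Tinv i * T i = 1) ∧
    (∀ i j, 1 ≤ i → i ≤ n - 1 → 1 ≤ j → j ≤ n - 1 → E i * E j = E j * E i) ∧
    (∀ i, 1 ≤ i → i ≤ n - 1 → E i * T i = T i * E i) ∧
    (∀ i j, 1 ≤ i → i ≤ n - 1 → 1 ≤ j → j ≤ n - 1 → 1 < Nat.dist i j →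
      E i * T j = T j * E i) ∧
    (∀ i j, 1 ≤ i → i ≤ n - 1 → 1 ≤ j → j ≤ n - 1 → Nat.dist i j = 1 →
      E i * (T j * T i) = T j * T i * E j) ∧
    (∀ i j, 1 ≤ i → i ≤ n - 1 → 1 ≤ j → j ≤ n - 1 → Nat.dist i j = 1 →
      E i * (T j * Tinv i) = T j * Tinv i * E j) ∧
    (∀ i j, 1 ≤ i → i ≤ n - 1 → 1 ≤ j → j ≤ n - 1 → Nat.dist i j = 1 →
      E i * E j * T i = E j * T i * E j ∧ E i * E j * T i = T i * (E i * E j)) ∧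
    (∀ i, 1 ≤ i → i ≤ n - 1 → E i * E i = E i) :=
  tb_representation_in_bt_algebra_general n u hu T E hTsq hEE hEsq hET hETfar hEET hETT Tinv hTinv
end

section
/- In the bt-algebra E_n, for i with i+1 ≤ n-1 (indices i and i-1 adjacent): T_i E_{i-1} T_i = T_{i-1} E_i T_{i-1} + (1-u) E_i T_{i-1} E_{i-1} + (u-1) T_i E_i E_{i-1}. -/
/-!
Left multiplication by `T` maps `E (1 + T)` to `u • E (1 + T)`, so for `u ≠ 0` the quadratic
relation makes `T` invertible, with inverse `T + (u⁻¹ - 1) E (1 + T)`. It therefore suffices to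
prove the identity after right multiplication by `T_{i-1}`. Using `E_{i-1} T_i T_{i-1} =
T_i T_{i-1} E_i`, both sides then become
`T_{i-1} E_i + (u - 1) (1 + T_i) T_{i-1} E_{i-1} E_i`.
-/

section Quadratic

variable {F A : Type*} [Field F] [Ring A] [Algebra F A]

structure IsBtQuadratic (u : F) (t e : A) : Prop where
  idem : e * e = e
  comm : e * t = t * e
  sq : t * t = 1 + (u - 1) • (e * (1 + t))

namespace IsBtQuadratic

variable {u : F} {t e : A}

theorem mul_mul_one_add (h : IsBtQuadratic u t e) :
    t * (e * (1 + t)) = u • (e * (1 + t)) := by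
  calc t * (e * (1 + t)) = e * t + e * (t * t) := by
        rw [← mul_assoc, ← h.comm, mul_add, mul_one, mul_assoc]
    _ = e * t + e + (u - 1) • (e * (1 + t)) := by
        rw [h.sq, mul_add, mul_one, mul_smul_comm, ← mul_assoc, h.idem]; abel
    _ = u • (e * (1 + t)) := by rw [mul_add, mul_one]; module

theorem mul_right_inv (hu : u ≠ 0) (h : IsBtQuadratic u t e) :
    t * (t + (u⁻¹ - 1) • (e * (1 + t))) = 1 := by
  rw [mul_add, mul_smul_comm, h.mul_mul_one_add, h.sq, smul_smul, sub_mul, inv_mul_cancel₀ hu]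
  module

theorem mul_right_cancel (hu : u ≠ 0) (h : IsBtQuadratic u t e) {x y : A}
    (hxy : x * t = y * t) : x = y := by
  have hinv := h.mul_right_inv hu
  calc x = x * t * (t + (u⁻¹ - 1) • (e * (1 + t))) := by rw [mul_assoc, hinv, mul_one]
    _ = y := by rw [hxy, mul_assoc, hinv, mul_one]

theorem mul_one_add_mul_self (h : IsBtQuadratic u t e) : e * (1 + t) * e = e * (1 + t) := by
  rw [mul_assoc, add_mul, one_mul, ← h.comm, mul_add, ← mul_assoc, h.idem, mul_add, mul_one]

theorem mul_one_add_comm (h : IsBtQuadratic u t e) : e * (1 + t) = (1 + t) * e := by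
  rw [mul_add, add_mul, h.comm, mul_one, one_mul]

end IsBtQuadratic

variable {u : F} {a b e f : A}

theorem tet_mul_eq (ha : a * a = 1 + (u - 1) • (e * (1 + a))) (hea : e * a = a * e)
    (hebe : e * b * e = b * (f * e)) (hfab : f * (a * b) = a * b * e) :
    a * f * a * b = b * e + (u - 1) • ((1 + a) * (b * (f * e))) := by
  have hea' : e * (1 + a) = (1 + a) * e := by rw [mul_add, add_mul, hea, mul_one, one_mul]
  calc a * f * a * b = a * a * (b * e) := by
        rw [mul_assoc (a * f), mul_assoc a, hfab]; noncomm_ring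
    _ = b * e + (u - 1) • ((1 + a) * (e * b * e)) := by
        rw [ha, add_mul, one_mul, smul_mul_assoc, hea']; noncomm_ring
    _ = b * e + (u - 1) • ((1 + a) * (b * (f * e))) := by rw [hebe]

theorem tet_rhs_mul_eq (hb : IsBtQuadratic u b f) (hef : e * f = f * e)
    (hfeb : f * e * b = b * (f * e)) :
    (b * e * b + (1 - u) • (e * b * f) + (u - 1) • (a * (e * f))) * b =
      b * e + (u - 1) • ((1 + a) * (b * (f * e))) := by
  have hefb : e * f * b = b * (f * e) := by rw [hef, hfeb]
  have hef1 : e * (f * (1 + b)) = (1 + b) * (f * e) := by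
    rw [mul_add, mul_add, mul_one, ← mul_assoc, hefb, hef, add_mul, one_mul]
  have heigen : b * ((1 + b) * (f * e)) = u • ((1 + b) * (f * e)) := by
    rw [← mul_assoc (1 + b), ← hb.mul_one_add_comm, ← mul_assoc b, hb.mul_mul_one_add,
      smul_mul_assoc]
  have hbebb : b * e * b * b = b * e + (u - 1) • (b * ((1 + b) * (f * e))) := by
    rw [mul_assoc, hb.sq, mul_add, mul_one, mul_smul_comm, mul_assoc, hef1]
  have hebfb : e * b * f * b = f * e + (u - 1) • ((1 + b) * (f * e)) := by
    calc e * b * f * b = e * (b * b) * f := by rw [mul_assoc _ f, hb.comm]; simp only [mul_assoc]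
      _ = e * f + (u - 1) • (e * (f * (1 + b) * f)) := by
        rw [hb.sq, mul_add, mul_one, add_mul, mul_smul_comm, smul_mul_assoc, mul_assoc e]
      _ = f * e + (u - 1) • ((1 + b) * (f * e)) := by
        rw [hb.mul_one_add_mul_self, hef, hef1]
  calc (b * e * b + (1 - u) • (e * b * f) + (u - 1) • (a * (e * f))) * b
      = b * e * b * b + (1 - u) • (e * b * f * b) + (u - 1) • (a * (e * f * b)) := by
        simp only [add_mul, smul_mul_assoc, mul_assoc]
    _ = b * e + (u - 1) • ((1 + a) * (b * (f * e))) := by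
        rw [hbebb, hebfb, hefb, heigen]
        simp only [add_mul, one_mul]
        module

theorem tet_eq (hu : u ≠ 0) (ha : a * a = 1 + (u - 1) • (e * (1 + a))) (hea : e * a = a * e)
    (hb : IsBtQuadratic u b f) (hef : e * f = f * e) (hfeb : f * e * b = b * (f * e))
    (hfeb' : f * e * b = e * b * e) (hfab : f * (a * b) = a * b * e) :
    a * f * a = b * e * b + (1 - u) • (e * b * f) + (u - 1) • (a * (e * f)) :=
  hb.mul_right_cancel hu <|
    (tet_mul_eq ha hea (hfeb'.symm.trans hfeb) hfab).trans (tet_rhs_mul_eq hb hef hfeb).symm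

end Quadratic

theorem bt_TET_general
    {F : Type*} [Field F] {A : Type*} [Ring A] [Algebra F A]
    (n : ℕ) (u : F) (hu : u ≠ 0) (T E : ℕ → A)
    (hTsq : ∀ i, 1 ≤ i → i ≤ n - 1 → T i * T i = 1 + (u - 1) • (E i * (1 + T i)))
    (hEE : ∀ i j, 1 ≤ i → i ≤ n - 1 → 1 ≤ j → j ≤ n - 1 → E i * E j = E j * E i)
    (hEsq : ∀ i, 1 ≤ i → i ≤ n - 1 → E i * E i = E i)
    (hET : ∀ i, 1 ≤ i → i ≤ n - 1 → E i * T i = T i * E i)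
    (hEET : ∀ i j, 1 ≤ i → i ≤ n - 1 → 1 ≤ j → j ≤ n - 1 → Nat.dist i j = 1 →
      E i * E j * T i = T i * (E i * E j) ∧ E i * E j * T i = E j * T i * E j)
    (hETT : ∀ i j, 1 ≤ i → i ≤ n - 1 → 1 ≤ j → j ≤ n - 1 → Nat.dist i j = 1 →
      E i * (T j * T i) = T j * T i * E j) :
    ∀ i j, 1 ≤ j → i ≤ n - 1 → i = j + 1 →
      T i * E j * T i =
        T j * E i * T j + (1 - u) • (E i * T j * E j) + (u - 1) • (T i * (E i * E j)) := by
  rintro i j hj hi rfl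
  have hj' : j ≤ n - 1 := by omega
  have hdist : Nat.dist j (j + 1) = 1 := by simp [Nat.dist]
  obtain ⟨hfeb, hfeb'⟩ := hEET j (j + 1) hj hj' (by omega) hi hdist
  exact tet_eq hu (hTsq _ (by omega) hi) (hET _ (by omega) hi)
    ⟨hEsq j hj hj', hET j hj hj', hTsq j hj hj'⟩ (hEE _ _ (by omega) hi hj hj') hfeb hfeb'
    (hETT j (j + 1) hj hj' (by omega) hi hdist)

theorem bt_TET
    {F : Type*} [Field F] {A : Type*} [Ring A] [Algebra F A]
    (n : ℕ) (u : F) (hu : u ≠ 0) (T E : ℕ → A)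
    (hTT : ∀ i j, 1 ≤ i → i ≤ n - 1 → 1 ≤ j → j ≤ n - 1 → 1 < Nat.dist i j →
      T i * T j = T j * T i)
    (hbraid : ∀ i j, 1 ≤ i → i ≤ n - 1 → 1 ≤ j → j ≤ n - 1 → Nat.dist i j = 1 →
      T i * T j * T i = T j * T i * T j)
    (hTsq : ∀ i, 1 ≤ i → i ≤ n - 1 → T i * T i = 1 + (u - 1) • (E i * (1 + T i)))
    (hEE : ∀ i j, 1 ≤ i → i ≤ n - 1 → 1 ≤ j → j ≤ n - 1 → E i * E j = E j * E i)
    (hEsq : ∀ i, 1 ≤ i → i ≤ n - 1 → E i * E i = E i)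
    (hET : ∀ i, 1 ≤ i → i ≤ n - 1 → E i * T i = T i * E i)
    (hETfar : ∀ i j, 1 ≤ i → i ≤ n - 1 → 1 ≤ j → j ≤ n - 1 → 1 < Nat.dist i j →
      E i * T j = T j * E i)
    (hEET : ∀ i j, 1 ≤ i → i ≤ n - 1 → 1 ≤ j → j ≤ n - 1 → Nat.dist i j = 1 →
      E i * E j * T i = T i * (E i * E j) ∧ E i * E j * T i = E j * T i * E j)
    (hETT : ∀ i j, 1 ≤ i → i ≤ n - 1 → 1 ≤ j → j ≤ n - 1 → Nat.dist i j = 1 →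
      E i * (T j * T i) = T j * T i * E j) :
    ∀ i j, 1 ≤ j → i ≤ n - 1 → i = j + 1 →
      T i * E j * T i =
        T j * E i * T j + (1 - u) • (E i * T j * E j) + (u - 1) • (T i * (E i * E j)) :=
  bt_TET_general n u hu T E hTsq hEE hEsq hET hEET hETT
end
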